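/- arXiv:2005.02017 — 7 statements merged into one kernel-verified Lean document; each statement's English description precedes it below -/
import Mathlib

section
/- For every (x,y) ∈ V and every g = (g₁,g₂,g₃) ∈ G one has P₀((x,y)·g) = det(g₁)⁻¹·det(g₂)·det(g₃)·g₁⁻¹·P₀(x,y)·g₁, and consequently P((x,y)·g) = (det(g₁)⁻¹·det(g₂)·det(g₃))²·P(x,y); in particular P is a relative invariant of the action. -/
open Matrix

/-- `2 × 2` matrices over `F`. -/
abbrev M2 (F : Type*) := Matrix (Fin 2) (Fin 2) F

/-- The right action of `G = GL₂(F) × GL₂(F) × GL₂(F)` on `V = M₂(F) × M₂(F)`: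
`(x,y)·(g₁,g₂,g₃) := (a·g₁⁻¹xg₂ + c·g₁⁻¹yg₂, b·g₁⁻¹xg₂ + d·g₁⁻¹yg₂)` where
`g₃ = [[a,b],[c,d]]`. -/
noncomputable def act {F : Type*} [Field F] (v : M2 F × M2 F)
    (g : GL (Fin 2) F × GL (Fin 2) F × GL (Fin 2) F) : M2 F × M2 F :=
  ((((g.2.2 : M2 F) 0 0) • (((g.1⁻¹ : GL (Fin 2) F) : M2 F) * v.1 * (g.2.1 : M2 F)) +
      ((g.2.2 : M2 F) 1 0) • (((g.1⁻¹ : GL (Fin 2) F) : M2 F) * v.2 * (g.2.1 : M2 F))),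
   (((g.2.2 : M2 F) 0 1) • (((g.1⁻¹ : GL (Fin 2) F) : M2 F) * v.1 * (g.2.1 : M2 F)) +
      ((g.2.2 : M2 F) 1 1) • (((g.1⁻¹ : GL (Fin 2) F) : M2 F) * v.2 * (g.2.1 : M2 F))))

/-- `P₀(x,y) = x·y^ι − y·x^ι`, where `m^ι` is the adjugate. -/
def P0 {F : Type*} [Field F] (v : M2 F × M2 F) : M2 F :=
  v.1 * v.2.adjugate - v.2 * v.1.adjugate

/-- The fundamental relative invariant `P(x,y) = −det(P₀(x,y))`. -/
def Pinv {F : Type*} [Field F] (v : M2 F × M2 F) : F := - (P0 v).det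

/-! On `2 × 2` matrices the adjugate is linear and reverses products, so `P₀` transforms like
a determinant in the pair `(x, y)` (giving the factor `det g₃`), and under `(x, y) ↦ (A x B, A y B)`
the inner factor `B · adj B = det B` collapses, leaving `det B · A P₀ adj A`. For `A = g₁⁻¹` one has
`adj A = det(g₁)⁻¹ g₁`. Taking determinants, the conjugation by `g₁` disappears and the scalar
gets squared. -/

theorem Matrix.adjugate_fin_two_add {R : Type*} [CommRing R] (M N : Matrix (Fin 2) (Fin 2) R) :
    adjugate (M + N) = adjugate M + adjugate N := by
  ext i j
  fin_cases i <;> fin_cases j <;> simp [adjugate_fin_two] <;> abel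

theorem Matrix.adjugate_coe_units_inv {n K : Type*} [Fintype n] [DecidableEq n] [Field K]
    (g : (Matrix n n K)ˣ) : adjugate (↑g⁻¹ : Matrix n n K) = (det (g : Matrix n n K))⁻¹ • ↑g := by
  have hdet : det (↑g⁻¹ : Matrix n n K) = (det (g : Matrix n n K))⁻¹ := by
    rw [coe_units_inv, det_nonsing_inv, Ring.inverse_eq_inv']
  calc adjugate (↑g⁻¹ : Matrix n n K)
      = adjugate (↑g⁻¹ : Matrix n n K) * (↑g⁻¹ * ↑g) := by rw [g.inv_mul, Matrix.mul_one]
    _ = (det (g : Matrix n n K))⁻¹ • ↑g := by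
      rw [← Matrix.mul_assoc, adjugate_mul, hdet, smul_mul, Matrix.one_mul]

section P0

variable {F : Type*} [Field F]

theorem P0_smul_add_smul (x y : M2 F) (a b c d : F) :
    P0 (a • x + c • y, b • x + d • y) = (a * d - b * c) • P0 (x, y) := by
  simp only [P0, adjugate_fin_two_add, adjugate_smul, Fintype.card_fin, Matrix.add_mul,
    Matrix.mul_add, smul_mul_smul_comm]
  module

theorem P0_mul_mul (A B : M2 F) (v : M2 F × M2 F) :
    P0 (A * v.1 * B, A * v.2 * B) = B.det • (A * P0 v * A.adjugate) := by
  have hB (w : M2 F) : B * (B.adjugate * w) = B.det • w := by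
    rw [← Matrix.mul_assoc, mul_adjugate, smul_mul, Matrix.one_mul]
  simp only [P0, adjugate_mul_distrib, Matrix.mul_assoc, hB, Matrix.mul_sub, Matrix.sub_mul,
    mul_smul_comm, smul_sub]

end P0

/-- `P₀((x,y)·g) = det(g₁)⁻¹ det(g₂) det(g₃) · g₁⁻¹ P₀(x,y) g₁` and consequently
`P((x,y)·g) = (det(g₁)⁻¹ det(g₂) det(g₃))² · P(x,y)`, i.e. `P` is a relative invariant. -/
theorem stmt0 {F : Type*} [Field F] (v : M2 F × M2 F)
    (g : GL (Fin 2) F × GL (Fin 2) F × GL (Fin 2) F) :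
    P0 (act v g) =
      (((g.1 : M2 F).det)⁻¹ * (g.2.1 : M2 F).det * (g.2.2 : M2 F).det) •
        (((g.1⁻¹ : GL (Fin 2) F) : M2 F) * P0 v * (g.1 : M2 F)) ∧
    Pinv (act v g) =
      (((g.1 : M2 F).det)⁻¹ * (g.2.1 : M2 F).det * (g.2.2 : M2 F).det) ^ 2 * Pinv v := by
  have hP0 : P0 (act v g) =
      (((g.1 : M2 F).det)⁻¹ * (g.2.1 : M2 F).det * (g.2.2 : M2 F).det) •
        (((g.1⁻¹ : GL (Fin 2) F) : M2 F) * P0 v * (g.1 : M2 F)) := by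
    rw [act, P0_smul_add_smul, P0_mul_mul, adjugate_coe_units_inv, ← det_fin_two, mul_smul_comm,
      smul_smul, smul_smul]
    congr 1
    ring
  refine ⟨hP0, ?_⟩
  rw [Pinv, Pinv, hP0, det_smul, det_units_conj', Fintype.card_fin]
  ring
end

section
/- For every (x,y) ∈ V: (i) writing Fⱼ(x,y) = (y₁, y₁₂, y₂), one has y₁₂² − 4·y₁·y₂ = P(x,y) for both j = 1 and j = 2; (ii) for every g = (g₁,g₂,g₃) ∈ G and every (u,v) ∈ F², Q_{F₁((x,y)·g)}(u,v) = det(g₂)·det(g₃)·Q_{F₁(x,y)}((g₁⁻¹)ᵀ·(u,v)) and Q_{F₂((x,y)·g)}(u,v) = det(g₁)⁻¹·det(g₃)·Q_{F₂(x,y)}(g₂·(u,v)), where Q_{(y₁,y₁₂,y₂)}(u,v) := y₁u² + y₁₂uv + y₂v² and matrices act on column vectors. -/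
/-! Both quadratic forms are determinants of `2 × 2` matrices built linearly from `(x, y)`:
`Q_{F₁(x,y)}(p)` is the determinant of the matrix with rows `pᵀx` and `pᵀy`, and `Q_{F₂(x,y)}(p)`
that of the matrix with rows `xp` and `yp`. The action of `(g₁, g₂, g₃)` multiplies such a
matrix by `g₃ᵀ` on the left and by `g₂` (resp. `(g₁⁻¹)ᵀ`) on the right, after substituting
`(g₁⁻¹)ᵀp` (resp. `g₂p`) for `p`, so multiplicativity of `det` gives the equivariance. The
discriminant identities are polynomial identities in the eight entries. -/

open Matrix

/-- The equivariant map `F₁ : V → F³`. -/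
def Fmap1 {F : Type*} [Field F] (v : M2 F × M2 F) : F × F × F :=
  (v.1 0 0 * v.2 0 1 - v.1 0 1 * v.2 0 0,
   (v.1 0 0 * v.2 1 1 - v.1 0 1 * v.2 1 0) + (v.1 1 0 * v.2 0 1 - v.1 1 1 * v.2 0 0),
   v.1 1 0 * v.2 1 1 - v.1 1 1 * v.2 1 0)

/-- The equivariant map `F₂ : V → F³`. -/
def Fmap2 {F : Type*} [Field F] (v : M2 F × M2 F) : F × F × F :=
  (v.1 0 0 * v.2 1 0 - v.2 0 0 * v.1 1 0,
   (v.1 0 0 * v.2 1 1 - v.2 0 1 * v.1 1 0) + (v.1 0 1 * v.2 1 0 - v.2 0 0 * v.1 1 1),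
   v.1 0 1 * v.2 1 1 - v.2 0 1 * v.1 1 1)

/-- The binary quadratic form attached to a triple `(y₁, y₁₂, y₂)`:
`Q(u,v) = y₁u² + y₁₂uv + y₂v²`. -/
def Qform {F : Type*} [Field F] (t : F × F × F) (u v : F) : F :=
  t.1 * u ^ 2 + t.2.1 * u * v + t.2.2 * v ^ 2

namespace Matrix

variable {R : Type*} [CommRing R] {l m n o : Type*}

theorem of_vecMul_smul_add [Fintype l] [Fintype m] [Fintype n] (g : Matrix (Fin 2) (Fin 2) R)
    (x y : Matrix m n R) (h : Matrix l m R) (k : Matrix n o R) (p : l → R) :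
    of ![p ᵥ* (g 0 0 • (h * x * k) + g 1 0 • (h * y * k)),
        p ᵥ* (g 0 1 • (h * x * k) + g 1 1 • (h * y * k))] =
      gᵀ * of ![(p ᵥ* h) ᵥ* x, (p ᵥ* h) ᵥ* y] * k := by
  ext i : 1
  fin_cases i <;>
    simp [mul_apply_eq_vecMul, vecMul_add, vecMul_smul, add_vecMul, smul_vecMul,
      ← vecMul_vecMul, vecHead, vecTail]

theorem of_smul_add_mulVec [Fintype m] [Fintype n] [Fintype o] (g : Matrix (Fin 2) (Fin 2) R)
    (x y : Matrix m n R) (h : Matrix l m R) (k : Matrix n o R) (p : o → R) :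
    of ![(g 0 0 • (h * x * k) + g 1 0 • (h * y * k)) *ᵥ p,
        (g 0 1 • (h * x * k) + g 1 1 • (h * y * k)) *ᵥ p] =
      gᵀ * of ![x *ᵥ (k *ᵥ p), y *ᵥ (k *ᵥ p)] * hᵀ := by
  ext i : 1
  fin_cases i <;>
    simp [mul_apply_eq_vecMul, add_mulVec, smul_mulVec, mulVec_add, mulVec_smul,
      ← mulVec_mulVec, vecMul_transpose, vecHead, vecTail]

end Matrix

section

variable {F : Type*} [Field F] (v : M2 F × M2 F)

theorem Fmap1_discr :
    (Fmap1 v).2.1 ^ 2 - 4 * (Fmap1 v).1 * (Fmap1 v).2.2 = Pinv v := by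
  simp only [Fmap1, Pinv, P0, adjugate_fin_two, det_fin_two, Matrix.sub_apply, mul_apply,
    Fin.sum_univ_two, of_apply, cons_val', cons_val_zero, cons_val_one, cons_val_fin_one]
  ring

theorem Fmap2_discr :
    (Fmap2 v).2.1 ^ 2 - 4 * (Fmap2 v).1 * (Fmap2 v).2.2 = Pinv v := by
  simp only [Fmap2, Pinv, P0, adjugate_fin_two, det_fin_two, Matrix.sub_apply, mul_apply,
    Fin.sum_univ_two, of_apply, cons_val', cons_val_zero, cons_val_one, cons_val_fin_one]
  ring

theorem Qform_Fmap1_eq_det (p : Fin 2 → F) :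
    Qform (Fmap1 v) (p 0) (p 1) = (of ![p ᵥ* v.1, p ᵥ* v.2]).det := by
  simp only [Qform, Fmap1, det_fin_two, vecMul, dotProduct, Fin.sum_univ_two, of_apply,
    cons_val', cons_val_zero, cons_val_one, cons_val_fin_one]
  ring

theorem Qform_Fmap2_eq_det (p : Fin 2 → F) :
    Qform (Fmap2 v) (p 0) (p 1) = (of ![v.1 *ᵥ p, v.2 *ᵥ p]).det := by
  simp only [Qform, Fmap2, mulVec_fin_two, det_fin_two, of_apply, cons_val', cons_val_zero,
    cons_val_one, cons_val_fin_one]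
  ring

end

/-- (i) the discriminants of `F₁(x,y)` and `F₂(x,y)` both equal `P(x,y)`;
(ii) the quadratic forms attached to `F₁` and `F₂` transform equivariantly under `G`. -/
theorem stmt1 {F : Type*} [Field F] (v : M2 F × M2 F) :
    ((Fmap1 v).2.1 ^ 2 - 4 * (Fmap1 v).1 * (Fmap1 v).2.2 = Pinv v ∧
     (Fmap2 v).2.1 ^ 2 - 4 * (Fmap2 v).1 * (Fmap2 v).2.2 = Pinv v) ∧
    (∀ (g : GL (Fin 2) F × GL (Fin 2) F × GL (Fin 2) F) (u w : F),
      Qform (Fmap1 (act v g)) u w =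
        (g.2.1 : M2 F).det * (g.2.2 : M2 F).det *
          Qform (Fmap1 v)
            ((((g.1⁻¹ : GL (Fin 2) F) : M2 F)ᵀ).mulVec ![u, w] 0)
            ((((g.1⁻¹ : GL (Fin 2) F) : M2 F)ᵀ).mulVec ![u, w] 1) ∧
      Qform (Fmap2 (act v g)) u w =
        ((g.1 : M2 F).det)⁻¹ * (g.2.2 : M2 F).det *
          Qform (Fmap2 v)
            ((g.2.1 : M2 F).mulVec ![u, w] 0)
            ((g.2.1 : M2 F).mulVec ![u, w] 1)) := by
  refine ⟨⟨Fmap1_discr v, Fmap2_discr v⟩, fun g u w => ⟨?_, ?_⟩⟩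
  · calc Qform (Fmap1 (act v g)) u w
        = (of ![![u, w] ᵥ* (act v g).1, ![u, w] ᵥ* (act v g).2]).det :=
          Qform_Fmap1_eq_det _ ![u, w]
      _ = _ := by
        rw [act, of_vecMul_smul_add, det_mul, det_mul, det_transpose, mulVec_transpose,
          Qform_Fmap1_eq_det]
        ring
  · calc Qform (Fmap2 (act v g)) u w
        = (of ![(act v g).1 *ᵥ ![u, w], (act v g).2 *ᵥ ![u, w]]).det :=
          Qform_Fmap2_eq_det _ ![u, w]
      _ = _ := by
        rw [act, of_smul_add_mulVec, det_mul, det_mul, det_transpose, det_transpose,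
          Qform_Fmap2_eq_det, coe_units_inv, det_nonsing_inv, Ring.inverse_eq_inv']
        ring
end

section
/- Assume char F ≠ 2. The singular set {(x,y) ∈ V : P(x,y) = 0} is the union of the G-orbits of the six elements x₀ := (0,0), x₁ := (0,E₁₂), x₂ := (0,I₂), x₃ := (E₁₁,E₁₂), x₄ := (E₁₂,E₂₂), x₅ := (E₁₂,I₂), and these six orbits are pairwise disjoint (here Eᵢⱼ denotes the 2×2 matrix unit and I₂ the identity matrix). -/
open Matrix

/-- The `G`-orbit of a point of `V`. -/
noncomputable def orbit {F : Type*} [Field F] (v : M2 F × M2 F) : Set (M2 F × M2 F) :=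
  {w | ∃ g : GL (Fin 2) F × GL (Fin 2) F × GL (Fin 2) F, act v g = w}

/-- The six representatives `x₀,…,x₅` of the singular orbits. -/
noncomputable def singRep {F : Type*} [Field F] : Fin 6 → M2 F × M2 F :=
  ![(0, 0),
    (0, !![0, 1; 0, 0]),
    (0, 1),
    (!![1, 0; 0, 0], !![0, 1; 0, 0]),
    (!![0, 1; 0, 0], !![0, 0; 0, 1]),
    (!![0, 1; 0, 0], 1)]

/-!
Everything is read off the pencil `c ↦ c₀ x + c₁ y` of a pair `(x, y)`: the element
`(g₁, g₂, g₃)` acts on it by `g₁⁻¹ (·) g₂` after the substitution `c ↦ g₃ c`, and `P(x, y)` is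
the discriminant of the binary quadratic form `c ↦ det (c₀ x + c₁ y)`.

If `x, y` are dependent, the pencil is spanned by one matrix `m`, whose rank gives `x₀, x₁, x₂`.
If they are independent but the pencil consists of singular matrices, write `x = p qᵀ`,
`y = r sᵀ`; then `det (x + y) = (p × r) (q × s)`, so `x` and `y` share their column line (`x₃`)
or their row line (`x₄`). Otherwise some member of the pencil is invertible; moving it to `I₂`
leaves `(z, I₂)` with `P(z, I₂) = disc z = 0`, so (as `2 ≠ 0`) `z` is a scalar plus a nilpotent
`n`, which is nonzero by independence and hence conjugate to `E₁₂`: this is `x₅`.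

The six orbits are told apart by four invariants: `v = 0`, dependence of `x, y`, singularity of
the whole pencil, and a common left kernel vector of `x` and `y`.
-/

section SingularOrbits

variable {F : Type*} [Field F]

def pencil (v : M2 F × M2 F) (c : Fin 2 → F) : M2 F := c 0 • v.1 + c 1 • v.2

lemma pencil_act (v : M2 F × M2 F) (g : GL (Fin 2) F × GL (Fin 2) F × GL (Fin 2) F)
    (c : Fin 2 → F) :
    pencil (act v g) c = ↑g.1⁻¹ * pencil v (↑g.2.2 *ᵥ c) * ↑g.2.1 := by
  simp only [pencil, act, mulVec, dotProduct, Fin.sum_univ_two, Matrix.mul_add, Matrix.add_mul,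
    Matrix.mul_smul, Matrix.smul_mul]
  module

lemma act_eq_pencil (v : M2 F × M2 F) (g : GL (Fin 2) F × GL (Fin 2) F × GL (Fin 2) F) :
    act v g = (↑g.1⁻¹ * pencil v (↑g.2.2 *ᵥ ![1, 0]) * ↑g.2.1,
      ↑g.1⁻¹ * pencil v (↑g.2.2 *ᵥ ![0, 1]) * ↑g.2.1) := by
  rw [show act v g = (pencil (act v g) ![1, 0], pencil (act v g) ![0, 1]) by simp [pencil],
    pencil_act, pencil_act]

lemma act_one (v : M2 F × M2 F) : act v 1 = v := by
  simp [act, one_apply]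

lemma act_mul (v : M2 F × M2 F) (g h : GL (Fin 2) F × GL (Fin 2) F × GL (Fin 2) F) :
    act (act v g) h = act v (g * h) := by
  rw [act_eq_pencil (act v g), pencil_act, pencil_act, act_eq_pencil v (g * h)]
  simp only [Prod.fst_mul, Prod.snd_mul, _root_.mul_inv_rev, Units.val_mul, mulVec_mulVec,
    Matrix.mul_assoc]

lemma act_zero (g : GL (Fin 2) F × GL (Fin 2) F × GL (Fin 2) F) : act 0 g = 0 := by
  simp [act]

lemma mem_orbit_self (v : M2 F × M2 F) : v ∈ orbit v := ⟨1, act_one v⟩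

lemma orbit_subset_of_mem {v w : M2 F × M2 F} (h : w ∈ orbit v) : orbit w ⊆ orbit v := by
  rintro u ⟨g', rfl⟩
  obtain ⟨g, rfl⟩ := h
  exact ⟨g * g', (act_mul v g g').symm⟩

lemma mem_orbit_symm {v w : M2 F × M2 F} (h : w ∈ orbit v) : v ∈ orbit w := by
  obtain ⟨g, rfl⟩ := h
  exact ⟨g⁻¹, by rw [act_mul, mul_inv_cancel, act_one]⟩

lemma orbit_eq_of_mem {v w : M2 F × M2 F} (h : w ∈ orbit v) : orbit w = orbit v :=
  (orbit_subset_of_mem h).antisymm (orbit_subset_of_mem (mem_orbit_symm h))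

lemma iff_of_mem_orbit {I : M2 F × M2 F → Prop} (hI : ∀ v g, I v → I (act v g))
    {v w : M2 F × M2 F} (h : w ∈ orbit v) : I w ↔ I v := by
  obtain ⟨g, rfl⟩ := h
  refine ⟨fun hw => ?_, hI v g⟩
  simpa [act_mul, act_one] using hI _ g⁻¹ hw

lemma disjoint_orbit_of_invariant {I : M2 F × M2 F → Prop} (hI : ∀ v g, I v → I (act v g))
    ⦃v₁ v₂ : M2 F × M2 F⦄ (h₁ : I v₁) (h₂ : ¬ I v₂) : Disjoint (orbit v₁) (orbit v₂) :=
  Set.disjoint_left.2 fun _ hw₁ hw₂ =>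
    h₂ ((iff_of_mem_orbit hI hw₂).1 ((iff_of_mem_orbit hI hw₁).2 h₁))

def cross (p r : Fin 2 → F) : F := p 0 * r 1 - p 1 * r 0

def colMat (p r : Fin 2 → F) : M2 F := !![p 0, r 0; p 1, r 1]

@[simp] lemma det_colMat (p r : Fin 2 → F) : (colMat p r).det = cross p r := by
  simp [colMat, cross, det_fin_two_of, mul_comm]

@[simp] lemma colMat_mulVec (p r c : Fin 2 → F) : colMat p r *ᵥ c = c 0 • p + c 1 • r := by
  ext i; fin_cases i <;> simp [colMat, mulVec, dotProduct] <;> ring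

lemma mul_colMat (A : M2 F) (p r : Fin 2 → F) :
    A * colMat p r = colMat (A *ᵥ p) (A *ᵥ r) := by
  ext i j; fin_cases i <;> fin_cases j <;> simp [colMat, mul_apply, mulVec, dotProduct]

lemma colMat_mul_vecMulVec_mul (p r q s a b : Fin 2 → F) :
    colMat p r * vecMulVec a b * (colMat q s)ᵀ =
      vecMulVec (a 0 • p + a 1 • r) (b 0 • q + b 1 • s) := by
  rw [mul_vecMulVec, vecMulVec_mul, vecMul_transpose, colMat_mulVec, colMat_mulVec]

lemma cross_swap (p r : Fin 2 → F) : cross r p = -cross p r := by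
  simp only [cross]; ring

lemma eq_smul_of_cross_eq_zero {p r : Fin 2 → F} (hp : p ≠ 0) (h : cross p r = 0) :
    ∃ t : F, r = t • p := by
  obtain ⟨i, hi⟩ : ∃ i, p i ≠ 0 := by
    by_contra! h'
    exact hp (funext h')
  refine ⟨r i / p i, funext fun j => ?_⟩
  rw [Pi.smul_apply, smul_eq_mul, div_mul_eq_mul_div, eq_div_iff hi]
  unfold cross at h
  fin_cases i <;> fin_cases j <;> simp <;> first | linear_combination h | linear_combination -h

lemma exists_cross_ne_zero {p : Fin 2 → F} (hp : p ≠ 0) : ∃ r, cross p r ≠ 0 := by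
  by_cases h : p 0 = 0
  · refine ⟨![1, 0], ?_⟩
    have : p 1 ≠ 0 := fun h' => hp (funext fun i => by fin_cases i <;> assumption)
    simpa [cross, h]
  · exact ⟨![0, 1], by simpa [cross]⟩

lemma exists_eq_vecMulVec_of_det_eq_zero {m : M2 F} (hm : m.det = 0) :
    ∃ p q : Fin 2 → F, m = vecMulVec p q := by
  by_cases h0 : m 0 = 0
  · refine ⟨![0, 1], m 1, ?_⟩
    ext i j
    fin_cases i <;> simp [vecMulVec_apply, h0]
  · obtain ⟨t, ht⟩ := eq_smul_of_cross_eq_zero h0 (by rwa [det_fin_two] at hm)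
    refine ⟨![1, t], m 0, ?_⟩
    ext i j
    fin_cases i <;> simp [vecMulVec_apply, ht]

lemma det_vecMulVec_add_vecMulVec (p q r s : Fin 2 → F) :
    (vecMulVec p q + vecMulVec r s).det = cross p r * cross q s := by
  simp [det_fin_two, vecMulVec_apply, cross]; ring

lemma mul_self_eq_zero_of_trace_eq_zero_of_det_eq_zero {n : M2 F} (ht : n.trace = 0)
    (hd : n.det = 0) : n * n = 0 := by
  rw [trace_fin_two] at ht
  rw [det_fin_two] at hd
  ext i j
  fin_cases i <;> fin_cases j <;> simp [mul_apply]
  · linear_combination n 0 0 * ht - hd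
  · linear_combination n 0 1 * ht
  · linear_combination n 1 0 * ht
  · linear_combination n 1 1 * ht - hd

lemma exists_mul_eq_mul_E12 {n : M2 F} (hn : n ≠ 0) (hsq : n * n = 0) :
    ∃ U : M2 F, U.det ≠ 0 ∧ n * U = U * !![0, 1; 0, 0] := by
  obtain ⟨e, he⟩ : ∃ e, n *ᵥ e ≠ 0 := by
    by_contra! h
    exact hn (ext_iff_mulVec.2 fun e => by simp [h e])
  have hne : n *ᵥ (n *ᵥ e) = 0 := by rw [mulVec_mulVec, hsq, zero_mulVec]
  refine ⟨colMat (n *ᵥ e) e, ?_, ?_⟩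
  · rw [det_colMat]
    intro h
    obtain ⟨t, ht⟩ := eq_smul_of_cross_eq_zero he h
    apply he
    rw [ht, mulVec_smul, hne, smul_zero]
  · rw [mul_colMat, hne]
    ext i j; fin_cases i <;> fin_cases j <;> simp [colMat, mul_apply]

lemma orbit_conj {U W : M2 F} (hU : U.det ≠ 0) (hW : W.det ≠ 0) (x y : M2 F) :
    orbit (U * x * W, U * y * W) = orbit (x, y) :=
  orbit_eq_of_mem ⟨((GeneralLinearGroup.mkOfDetNeZero U hU)⁻¹,
    GeneralLinearGroup.mkOfDetNeZero W hW, 1), by simp [act, one_apply]⟩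

lemma orbit_colMat_conj {p r q s : Fin 2 → F} (h₁ : cross p r ≠ 0) (h₂ : cross q s ≠ 0)
    (x y : M2 F) :
    orbit (colMat p r * x * (colMat q s)ᵀ, colMat p r * y * (colMat q s)ᵀ) = orbit (x, y) :=
  orbit_conj (by simpa) (by simpa) x y

lemma orbit_pencil {p r : Fin 2 → F} (h : cross p r ≠ 0) (v : M2 F × M2 F) :
    orbit (pencil v p, pencil v r) = orbit v :=
  orbit_eq_of_mem ⟨(1, 1, GeneralLinearGroup.mkOfDetNeZero (colMat p r) (by simpa)), by
    simp only [act_eq_pencil, GeneralLinearGroup.val_mkOfDetNeZero, colMat_mulVec]; simp⟩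

lemma P0_pencil (v : M2 F × M2 F) (p r : Fin 2 → F) :
    P0 (pencil v p, pencil v r) = cross p r • P0 v := by
  ext i j
  fin_cases i <;> fin_cases j <;>
    simp [P0, pencil, adjugate_fin_two, cross, mul_apply] <;> ring

lemma P0_conj (U W x y : M2 F) :
    P0 (U * x * W, U * y * W) = W.det • (U * P0 (x, y) * adjugate U) := by
  have key : ∀ m n : M2 F,
      U * m * W * adjugate (U * n * W) = W.det • (U * (m * adjugate n) * adjugate U) := by
    intro m n
    rw [adjugate_mul_distrib, adjugate_mul_distrib]
    calc U * m * W * (adjugate W * (adjugate n * adjugate U))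
        = U * m * (W * adjugate W) * (adjugate n * adjugate U) := by noncomm_ring
      _ = W.det • (U * (m * adjugate n) * adjugate U) := by
        rw [mul_adjugate]
        simp only [Matrix.mul_smul, Matrix.smul_mul, Matrix.mul_one]
        noncomm_ring
  simp only [P0, key, ← smul_sub, ← Matrix.sub_mul, ← Matrix.mul_sub]

lemma Pinv_conj (U W x y : M2 F) :
    Pinv (U * x * W, U * y * W) = (U.det * W.det) ^ 2 * Pinv (x, y) := by
  simp only [Pinv, P0_conj, det_smul, det_mul, det_adjugate, Fintype.card_fin]
  ring

lemma Pinv_pencil (v : M2 F × M2 F) (p r : Fin 2 → F) :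
    Pinv (pencil v p, pencil v r) = cross p r ^ 2 * Pinv v := by
  simp only [Pinv, P0_pencil, det_smul, Fintype.card_fin]
  ring

lemma Pinv_act (v : M2 F × M2 F) (g : GL (Fin 2) F × GL (Fin 2) F × GL (Fin 2) F) :
    Pinv (act v g) =
      ((g.1⁻¹ : GL (Fin 2) F).val.det * g.2.1.val.det * g.2.2.val.det) ^ 2 * Pinv v := by
  rw [act_eq_pencil, Pinv_conj, Pinv_pencil]
  have : cross (↑g.2.2 *ᵥ ![1, 0]) (↑g.2.2 *ᵥ ![0, 1]) = g.2.2.val.det := by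
    simp [cross, det_fin_two, mulVec, dotProduct]; ring
  rw [this]
  ring

lemma Pinv_eq_zero_iff_of_mem_orbit {v w : M2 F × M2 F} (h : w ∈ orbit v) :
    Pinv w = 0 ↔ Pinv v = 0 :=
  iff_of_mem_orbit (I := fun u => Pinv u = 0) (fun v g h => by rw [Pinv_act, h, mul_zero]) h

lemma Pinv_snd_one (z : M2 F) : Pinv (z, 1) = z.discr := by
  simp [Pinv, P0, discr_fin_two, adjugate_fin_two, det_fin_two, trace_fin_two]
  ring

def IsDegeneratePencil (v : M2 F × M2 F) : Prop := ∃ c ≠ 0, pencil v c = 0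

def IsSingularPencil (v : M2 F × M2 F) : Prop := ∀ c, (pencil v c).det = 0

def HasCommonLeftKernel (v : M2 F × M2 F) : Prop := ∃ φ ≠ 0, φ ᵥ* v.1 = 0 ∧ φ ᵥ* v.2 = 0

lemma IsDegeneratePencil.act {v : M2 F × M2 F} (h : IsDegeneratePencil v)
    (g : GL (Fin 2) F × GL (Fin 2) F × GL (Fin 2) F) : IsDegeneratePencil (act v g) := by
  obtain ⟨c, hc, h0⟩ := h
  refine ⟨((g.2.2⁻¹ : GL (Fin 2) F) : M2 F) *ᵥ c, fun h => hc ?_, ?_⟩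
  · have := congrArg ((g.2.2 : M2 F) *ᵥ ·) h
    rwa [mulVec_mulVec, Units.mul_inv, one_mulVec, mulVec_zero] at this
  · rw [pencil_act, mulVec_mulVec, Units.mul_inv, one_mulVec, h0, Matrix.mul_zero,
      Matrix.zero_mul]

lemma IsSingularPencil.act {v : M2 F × M2 F} (h : IsSingularPencil v)
    (g : GL (Fin 2) F × GL (Fin 2) F × GL (Fin 2) F) : IsSingularPencil (act v g) := fun c => by
  rw [pencil_act, det_mul, det_mul, h, mul_zero, zero_mul]

lemma HasCommonLeftKernel.act {v : M2 F × M2 F} (h : HasCommonLeftKernel v)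
    (g : GL (Fin 2) F × GL (Fin 2) F × GL (Fin 2) F) : HasCommonLeftKernel (act v g) := by
  obtain ⟨φ, hφ, h₁, h₂⟩ := h
  have key : ∀ c, φ ᵥ* (g.1 : M2 F) ᵥ*
      (((g.1⁻¹ : GL (Fin 2) F) : M2 F) * pencil v c * (g.2.1 : M2 F)) = 0 := fun c => by
    rw [vecMul_vecMul, ← Matrix.mul_assoc, ← Matrix.mul_assoc, Units.mul_inv, Matrix.one_mul,
      ← vecMul_vecMul, pencil, vecMul_add, vecMul_smul, vecMul_smul, h₁, h₂]
    simp
  refine ⟨φ ᵥ* (g.1 : M2 F), fun h => hφ ?_, ?_, ?_⟩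
  · have := congrArg (· ᵥ* ((g.1⁻¹ : GL (Fin 2) F) : M2 F)) h
    rwa [vecMul_vecMul, Units.mul_inv, vecMul_one, zero_vecMul] at this
  all_goals rw [act_eq_pencil]; exact key _

lemma isDegeneratePencil_iff_of_mem_orbit {v w : M2 F × M2 F} (h : w ∈ orbit v) :
    IsDegeneratePencil w ↔ IsDegeneratePencil v :=
  iff_of_mem_orbit (fun _ g h => h.act g) h

lemma IsDegeneratePencil.of_fst_eq_zero {v : M2 F × M2 F} (h : v.1 = 0) :
    IsDegeneratePencil v :=
  ⟨![1, 0], by simp, by simp [pencil, h]⟩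

lemma IsDegeneratePencil.of_snd_eq_smul {v : M2 F × M2 F} (t : F) (h : v.2 = t • v.1) :
    IsDegeneratePencil v :=
  ⟨![t, -1], by simp, by simp [pencil, h]⟩

lemma singRep_one : singRep (F := F) 1 = (0, vecMulVec ![1, 0] ![0, 1]) := by
  ext i j <;> fin_cases i <;> fin_cases j <;> simp [singRep, vecMulVec_apply]

lemma singRep_three :
    singRep (F := F) 3 = (vecMulVec ![1, 0] ![1, 0], vecMulVec ![1, 0] ![0, 1]) := by
  ext i j <;> fin_cases i <;> fin_cases j <;> simp [singRep, vecMulVec_apply]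

lemma singRep_four :
    singRep (F := F) 4 = (vecMulVec ![1, 0] ![0, 1], vecMulVec ![0, 1] ![0, 1]) := by
  ext i j <;> fin_cases i <;> fin_cases j <;> simp [singRep, vecMulVec_apply]

lemma exists_orbit_zero_fst_eq_singRep (m : M2 F) :
    ∃ i, orbit (0, m) = orbit (singRep (F := F) i) := by
  by_cases hm : m = 0
  · exact ⟨0, by rw [hm]; rfl⟩
  by_cases hd : m.det = 0
  · obtain ⟨p, q, rfl⟩ := exists_eq_vecMulVec_of_det_eq_zero hd
    obtain ⟨hp, hq⟩ : p ≠ 0 ∧ q ≠ 0 := by simpa [not_or] using hm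
    obtain ⟨r, hr⟩ := exists_cross_ne_zero hp
    obtain ⟨s, hs⟩ := exists_cross_ne_zero hq
    refine ⟨1, ?_⟩
    conv_rhs => rw [singRep_one, ← orbit_colMat_conj (q := s) hr
      (by rwa [cross_swap, neg_ne_zero]), Matrix.mul_zero, Matrix.zero_mul,
      colMat_mul_vecMulVec_mul]
    simp
  · have h := orbit_conj (U := 1) (by simp) hd 0 1
    rw [Matrix.mul_zero, Matrix.zero_mul, Matrix.one_mul, Matrix.one_mul] at h
    exact ⟨2, h⟩

lemma exists_orbit_eq_singRep_of_isDegeneratePencil {v : M2 F × M2 F}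
    (hD : IsDegeneratePencil v) : ∃ i, orbit v = orbit (singRep (F := F) i) := by
  obtain ⟨c, hc, h0⟩ := hD
  obtain ⟨r, hr⟩ := exists_cross_ne_zero hc
  rw [← orbit_pencil hr v, h0]
  exact exists_orbit_zero_fst_eq_singRep _

lemma orbit_eq_singRep_three_or_four {v : M2 F × M2 F} (hS : IsSingularPencil v)
    (hD : ¬ IsDegeneratePencil v) :
    orbit v = orbit (singRep (F := F) 3) ∨ orbit v = orbit (singRep (F := F) 4) := by
  obtain ⟨x, y⟩ := v
  obtain ⟨p, q, rfl⟩ := exists_eq_vecMulVec_of_det_eq_zero (by simpa [pencil] using hS ![1, 0])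
  obtain ⟨r, s, rfl⟩ := exists_eq_vecMulVec_of_det_eq_zero (by simpa [pencil] using hS ![0, 1])
  obtain ⟨hp, hq⟩ : p ≠ 0 ∧ q ≠ 0 := by
    simpa [not_or] using fun h => hD (IsDegeneratePencil.of_fst_eq_zero h)
  have hpr_qs : cross p r * cross q s = 0 := by
    simpa [pencil, det_vecMulVec_add_vecMulVec] using hS ![1, 1]
  rcases mul_eq_zero.1 hpr_qs with h | h
  · obtain ⟨t, rfl⟩ := eq_smul_of_cross_eq_zero hp h
    have hqs : cross q (t • s) ≠ 0 := fun h' => by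
      obtain ⟨e, he⟩ := eq_smul_of_cross_eq_zero hq h'
      exact hD (IsDegeneratePencil.of_snd_eq_smul e (by
        rw [smul_vecMulVec, ← vecMulVec_smul, he, vecMulVec_smul]))
    obtain ⟨r', hr'⟩ := exists_cross_ne_zero hp
    left
    conv_rhs => rw [singRep_three, ← orbit_colMat_conj hr' hqs, colMat_mul_vecMulVec_mul,
      colMat_mul_vecMulVec_mul]
    simp
  · obtain ⟨t, rfl⟩ := eq_smul_of_cross_eq_zero hq h
    have hpr : cross p (t • r) ≠ 0 := fun h' => by
      obtain ⟨e, he⟩ := eq_smul_of_cross_eq_zero hp h'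
      exact hD (IsDegeneratePencil.of_snd_eq_smul e (by
        rw [vecMulVec_smul, ← smul_vecMulVec, he, smul_vecMulVec]))
    obtain ⟨s', hs'⟩ := exists_cross_ne_zero hq
    right
    conv_rhs => rw [singRep_four, ← orbit_colMat_conj (q := s') hpr
      (by rwa [cross_swap, neg_ne_zero]), colMat_mul_vecMulVec_mul, colMat_mul_vecMulVec_mul]
    simp

lemma orbit_eq_singRep_five_of_trace_eq_zero (h2 : (2 : F) ≠ 0) {n : M2 F}
    (ht : n.trace = 0) (hP : Pinv (n, 1) = 0) (hD : ¬ IsDegeneratePencil (n, 1)) :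
    orbit (n, 1) = orbit (singRep 5) := by
  have hn : n ≠ 0 := fun h => hD (IsDegeneratePencil.of_fst_eq_zero h)
  have hd : n.det = 0 := by
    rw [Pinv_snd_one, discr_fin_two, ht] at hP
    exact mul_left_cancel₀ (mul_ne_zero h2 h2) (by linear_combination -hP)
  obtain ⟨U, hU, hnU⟩ :=
    exists_mul_eq_mul_E12 hn (mul_self_eq_zero_of_trace_eq_zero_of_det_eq_zero ht hd)
  have hU' : IsUnit U.det := isUnit_iff_ne_zero.2 hU
  have hconj : (n, (1 : M2 F)) = (U * !![0, 1; 0, 0] * U⁻¹, U * 1 * U⁻¹) := by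
    rw [← hnU, mul_nonsing_inv_cancel_right _ _ hU', Matrix.mul_one, mul_nonsing_inv _ hU']
  rw [hconj, orbit_conj hU (isUnit_nonsing_inv_det U hU').ne_zero]
  rfl

lemma orbit_snd_one_eq_singRep_five (h2 : (2 : F) ≠ 0) {z : M2 F} (hP : Pinv (z, 1) = 0)
    (hD : ¬ IsDegeneratePencil (z, 1)) : orbit (z, 1) = orbit (singRep 5) := by
  have hshift : orbit (z - (z.trace / 2) • 1, 1) = orbit (z, 1) := by
    simpa [pencil, sub_eq_add_neg] using
      orbit_pencil (p := ![1, -(z.trace / 2)]) (r := ![0, 1]) (by simp [cross]) (z, 1)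
  have hmem : (z, 1) ∈ orbit (z - (z.trace / 2) • 1, 1) := by
    rw [hshift]; exact mem_orbit_self _
  rw [← hshift]
  refine orbit_eq_singRep_five_of_trace_eq_zero h2 ?_
    ((Pinv_eq_zero_iff_of_mem_orbit hmem).1 hP)
    (mt (isDegeneratePencil_iff_of_mem_orbit hmem).2 hD)
  rw [trace_sub, trace_smul, trace_one, Fintype.card_fin, smul_eq_mul]
  field_simp
  ring

lemma orbit_eq_singRep_five (h2 : (2 : F) ≠ 0) {v : M2 F × M2 F} (hP : Pinv v = 0)
    (hS : ¬ IsSingularPencil v) (hD : ¬ IsDegeneratePencil v) :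
    orbit v = orbit (singRep 5) := by
  obtain ⟨c, hc⟩ : ∃ c, (pencil v c).det ≠ 0 := by simpa [IsSingularPencil] using hS
  have hc0 : c ≠ 0 := by
    rintro rfl
    simp [pencil] at hc
  obtain ⟨r, hr⟩ := exists_cross_ne_zero hc0
  have hz : orbit v = orbit (pencil v r * (pencil v c)⁻¹, 1) := by
    have h := orbit_conj (U := 1) (by simp) hc (pencil v r * (pencil v c)⁻¹) 1
    rwa [Matrix.one_mul, Matrix.one_mul, Matrix.one_mul, nonsing_inv_mul_cancel_right _ _
      (isUnit_iff_ne_zero.2 hc), orbit_pencil (by rwa [cross_swap, neg_ne_zero])] at h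
  have hmem : v ∈ orbit (pencil v r * (pencil v c)⁻¹, 1) := by
    rw [← hz]; exact mem_orbit_self v
  rw [hz]
  exact orbit_snd_one_eq_singRep_five h2 ((Pinv_eq_zero_iff_of_mem_orbit hmem).1 hP)
    (mt (isDegeneratePencil_iff_of_mem_orbit hmem).2 hD)

lemma exists_orbit_eq_singRep (h2 : (2 : F) ≠ 0) {v : M2 F × M2 F} (hP : Pinv v = 0) :
    ∃ i, orbit v = orbit (singRep (F := F) i) := by
  by_cases hD : IsDegeneratePencil v
  · exact exists_orbit_eq_singRep_of_isDegeneratePencil hD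
  by_cases hS : IsSingularPencil v
  · rcases orbit_eq_singRep_three_or_four hS hD with h | h
    exacts [⟨3, h⟩, ⟨4, h⟩]
  · exact ⟨5, orbit_eq_singRep_five h2 hP hS hD⟩

lemma Pinv_singRep (i : Fin 6) : Pinv (singRep (F := F) i) = 0 := by
  fin_cases i <;> simp [singRep, Pinv, P0, adjugate_fin_two, det_fin_two]

lemma singRep_ne_zero {i : Fin 6} (hi : i ≠ 0) : singRep (F := F) i ≠ 0 := by
  fin_cases i <;> simp [singRep, Prod.ext_iff, ← Matrix.ext_iff, Fin.forall_fin_two] at hi ⊢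

lemma isDegeneratePencil_singRep {i : Fin 6} (hi : i ≤ 2) :
    IsDegeneratePencil (singRep (F := F) i) :=
  ⟨![1, 0], by simp, by fin_cases i <;> simp [singRep, pencil] at hi ⊢⟩

lemma not_isDegeneratePencil_singRep {i : Fin 6} (hi : 3 ≤ i) :
    ¬ IsDegeneratePencil (singRep (F := F) i) := by
  rintro ⟨c, hc, h⟩
  apply hc
  fin_cases i <;> simp [singRep, pencil, ← Matrix.ext_iff, Fin.forall_fin_two] at hi h ⊢ <;>
    ext j <;> fin_cases j <;> simp [h]

lemma isSingularPencil_singRep {i : Fin 6} (hi : i ≠ 2 ∧ i ≠ 5) :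
    IsSingularPencil (singRep (F := F) i) := fun c => by
  fin_cases i <;> simp [singRep, pencil, det_fin_two] at hi ⊢

lemma not_isSingularPencil_singRep {i : Fin 6} (hi : i = 2 ∨ i = 5) :
    ¬ IsSingularPencil (singRep (F := F) i) := fun h => by
  rcases hi with rfl | rfl <;> simpa [singRep, pencil] using h ![0, 1]

lemma hasCommonLeftKernel_singRep_three : HasCommonLeftKernel (singRep (F := F) 3) :=
  ⟨![0, 1], by simp, by simp [singRep]⟩

lemma not_hasCommonLeftKernel_singRep_four : ¬ HasCommonLeftKernel (singRep (F := F) 4) := by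
  rintro ⟨φ, hφ, h₁, h₂⟩
  apply hφ
  ext j
  fin_cases j <;> simp [singRep, funext_iff, Fin.forall_fin_two] at h₁ h₂ ⊢ <;> assumption

lemma disjoint_orbit_singRep_of_lt {i j : Fin 6} (hij : i < j) :
    Disjoint (orbit (singRep (F := F) i)) (orbit (singRep (F := F) j)) := by
  have hZ := disjoint_orbit_of_invariant (I := (· = (0 : M2 F × M2 F)))
    fun _ g h => by rw [h, act_zero]
  have hD := disjoint_orbit_of_invariant (I := IsDegeneratePencil (F := F)) fun _ g h => h.act g
  have hS := disjoint_orbit_of_invariant (I := IsSingularPencil (F := F)) fun _ g h => h.act g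
  have hC := disjoint_orbit_of_invariant (I := HasCommonLeftKernel (F := F)) fun _ g h => h.act g
  fin_cases i <;> fin_cases j <;> simp at hij
  all_goals first
    | exact hZ rfl (singRep_ne_zero (by decide))
    | exact hD (isDegeneratePencil_singRep (by decide)) (not_isDegeneratePencil_singRep (by decide))
    | exact hS (isSingularPencil_singRep (by decide)) (not_isSingularPencil_singRep (by decide))
    | exact hC hasCommonLeftKernel_singRep_three not_hasCommonLeftKernel_singRep_four

end SingularOrbits

/-- in characteristic ≠ 2 the singular set `{P = 0}` is the disjoint union of
the `G`-orbits of `x₀ = (0,0)`, `x₁ = (0,E₁₂)`, `x₂ = (0,I₂)`, `x₃ = (E₁₁,E₁₂)`,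
`x₄ = (E₁₂,E₂₂)`, `x₅ = (E₁₂,I₂)`. -/
theorem stmt2 {F : Type*} [Field F] (h2 : (2 : F) ≠ 0) :
    ({v : M2 F × M2 F | Pinv v = 0} = ⋃ i : Fin 6, orbit (singRep (F := F) i)) ∧
    (∀ i j : Fin 6, i ≠ j →
      Disjoint (orbit (singRep (F := F) i)) (orbit (singRep (F := F) j))) := by
  refine ⟨Set.ext fun v => ⟨fun hP => ?_, fun hv => ?_⟩, fun i j hij => ?_⟩
  · obtain ⟨i, hi⟩ := exists_orbit_eq_singRep h2 hP
    exact Set.mem_iUnion.2 ⟨i, hi ▸ mem_orbit_self v⟩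
  · obtain ⟨i, hi⟩ := Set.mem_iUnion.1 hv
    exact (Pinv_eq_zero_iff_of_mem_orbit hi).2 (Pinv_singRep i)
  · rcases hij.lt_or_gt with h | h
    exacts [disjoint_orbit_singRep_of_lt h, (disjoint_orbit_singRep_of_lt h).symm]
end

section
/- For every j ∈ ℕ, setting B_j := Σ_{l≥0} β(j+l)²·Xˡ and C_j := Σ_{l≥0} β(j+l+1)·β(j+l)·Xˡ in ℝ⟦X⟧, one has (1 + q⁻¹·X)·C_j = q⁻¹λ·B_j + (β(j)·β(j+1) − q⁻¹λ·β(j)²). -/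
/-! Beyond the constant term, comparing coefficients of `X^(n+1)` leaves
`β(k+2)β(k+1) + q⁻¹β(k+1)β(k) = q⁻¹λβ(k+1)²` with `k = j + n`, which is the recurrence
multiplied by `q⁻¹β(k+1)`. -/

open PowerSeries

theorem PowerSeries.one_add_C_mul_X_mul_mk {R : Type*} [CommRing R] (a c : R) (f g : ℕ → R)
    (h : ∀ n, f (n + 1) + c * f n = a * g (n + 1)) :
    (1 + C c * X) * mk f = C a * mk g + C (f 0 - a * g 0) := by
  ext n
  cases n with
  | zero => simp
  | succ n =>
    rw [add_mul, one_mul, mul_assoc, map_add, map_add, coeff_C_mul, coeff_succ_X_mul,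
      coeff_C_mul, coeff_mk, coeff_mk, coeff_mk, coeff_C, if_neg n.succ_ne_zero, add_zero, h]

theorem mul_succ_add_of_recurrence {K : Type*} [Field K] {q lam : K} (hq : q ≠ 0) {β : ℕ → K}
    (hrec : ∀ k : ℕ, q * β (k + 2) - lam * β (k + 1) + β k = 0) (k : ℕ) :
    β (k + 2) * β (k + 1) + q⁻¹ * (β (k + 1) * β k) = q⁻¹ * lam * β (k + 1) ^ 2 := by
  linear_combination q⁻¹ * β (k + 1) * hrec k - β (k + 2) * β (k + 1) * mul_inv_cancel₀ hq

/-- with `B_j = Σ β(j+l)²Xˡ` and `C_j = Σ β(j+l+1)β(j+l)Xˡ`,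
`(1 + q⁻¹X)·C_j = q⁻¹λ·B_j + (β(j)β(j+1) − q⁻¹λβ(j)²)` in `ℝ⟦X⟧`. -/
theorem stmt8 (q lam : ℝ) (hq : q ≠ 0) (β : ℕ → ℝ)
    (hrec : ∀ k : ℕ, q * β (k + 2) - lam * β (k + 1) + β k = 0) (j : ℕ) :
    (1 + PowerSeries.C q⁻¹ * PowerSeries.X) *
        PowerSeries.mk (fun l => β (j + l + 1) * β (j + l)) =
      PowerSeries.C (q⁻¹ * lam) * PowerSeries.mk (fun l => β (j + l) ^ 2) +
        PowerSeries.C (β j * β (j + 1) - q⁻¹ * lam * β j ^ 2) := by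
  rw [one_add_C_mul_X_mul_mk (q⁻¹ * lam) q⁻¹ _ (fun l => β (j + l) ^ 2)
    fun n => mul_succ_add_of_recurrence hq hrec (j + n)]
  simp only [add_zero, mul_comm (β (j + 1))]
end

section
/- For every j ∈ ℕ, setting B_j := Σ_{l≥0} β(j+l)²·Xˡ in ℝ⟦X⟧, one has (1 − (q⁻¹λ² − 1)·q⁻¹·X + (q⁻¹λ² − 1)·q⁻²·X² − q⁻³·X³)·B_j = β(j)² + (β(j+1)² − q⁻¹·(q⁻¹λ² − 1)·β(j)²)·X + q⁻¹·(β(j+1) − q⁻¹λ·β(j))²·X². -/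
/-!
If `β(k+2) = u β(k+1) - w β(k)` and `r, s` are the roots of `x² - u x + w`, then `β(k)²` is a
combination of `(r²)ᵏ, (rs)ᵏ, (s²)ᵏ`, so it satisfies the third-order recurrence whose
characteristic roots are `r², rs, s²`; their elementary symmetric functions are `u² - w`,
`w (u² - w)` and `w³`. Multiplying the generating function of a solution of a third-order
recurrence by its reversed characteristic polynomial leaves only the terms of degree `< 3`.
With `u = q⁻¹λ` and `w = q⁻¹` this is the claimed identity.
-/

open PowerSeries

theorem cubic_mul_mk_eq_of_recurrence {R : Type*} [CommRing R] (a b c : R) (s : ℕ → R)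
    (hs : ∀ k, s (k + 3) = a * s (k + 2) - b * s (k + 1) + c * s k) :
    (1 - C a * X + C b * X ^ 2 - C c * X ^ 3) * mk s =
      C (s 0) + C (s 1 - a * s 0) * X + C (s 2 - a * s 1 + b * s 0) * X ^ 2 := by
  ext n
  simp only [sub_mul, add_mul, one_mul, mul_assoc, map_sub, map_add, coeff_C_mul,
    coeff_X_pow_mul', coeff_mk, coeff_C, coeff_X_pow, coeff_X]
  rcases n with _ | _ | _ | n
  · simp
  · simp [coeff_succ_X_mul]
  · simp [coeff_succ_X_mul]
  · simp [coeff_succ_X_mul, hs]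
    ring

theorem sq_recurrence_of_recurrence {R : Type*} [CommRing R] (u w : R) (β : ℕ → R)
    (hβ : ∀ k, β (k + 2) = u * β (k + 1) - w * β k) (k : ℕ) :
    β (k + 3) ^ 2 = (u ^ 2 - w) * β (k + 2) ^ 2 - w * (u ^ 2 - w) * β (k + 1) ^ 2
      + w ^ 3 * β k ^ 2 := by
  rw [hβ (k + 1), hβ k]
  ring

theorem cubic_mul_mk_sq_eq_of_recurrence {R : Type*} [CommRing R] (u w : R) (β : ℕ → R)
    (hβ : ∀ k, β (k + 2) = u * β (k + 1) - w * β k) (j : ℕ) :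
    (1 - C (u ^ 2 - w) * X + C (w * (u ^ 2 - w)) * X ^ 2 - C (w ^ 3) * X ^ 3) *
        mk (fun l => β (j + l) ^ 2) =
      C (β j ^ 2) + C (β (j + 1) ^ 2 - (u ^ 2 - w) * β j ^ 2) * X +
        C (w * (β (j + 1) - u * β j) ^ 2) * X ^ 2 := by
  rw [cubic_mul_mk_eq_of_recurrence _ _ _ _ fun k => sq_recurrence_of_recurrence u w β hβ (j + k),
    add_zero, hβ j]
  congr 3
  ring

/-- with `B_j = Σ β(j+l)²Xˡ`,
`(1 − (q⁻¹λ² − 1)q⁻¹X + (q⁻¹λ² − 1)q⁻²X² − q⁻³X³)·B_j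
  = β(j)² + (β(j+1)² − q⁻¹(q⁻¹λ² − 1)β(j)²)·X + q⁻¹(β(j+1) − q⁻¹λβ(j))²·X²` in `ℝ⟦X⟧`. -/
theorem stmt9 (q lam : ℝ) (hq : q ≠ 0) (β : ℕ → ℝ)
    (hrec : ∀ k : ℕ, q * β (k + 2) - lam * β (k + 1) + β k = 0) (j : ℕ) :
    (1 - PowerSeries.C ((q⁻¹ * lam ^ 2 - 1) * q⁻¹) * PowerSeries.X +
        PowerSeries.C ((q⁻¹ * lam ^ 2 - 1) * q⁻¹ ^ 2) * PowerSeries.X ^ 2 -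
        PowerSeries.C (q⁻¹ ^ 3) * PowerSeries.X ^ 3) *
      PowerSeries.mk (fun l => β (j + l) ^ 2) =
    PowerSeries.C (β j ^ 2) +
      PowerSeries.C (β (j + 1) ^ 2 - q⁻¹ * (q⁻¹ * lam ^ 2 - 1) * β j ^ 2) *
        PowerSeries.X +
      PowerSeries.C (q⁻¹ * (β (j + 1) - q⁻¹ * lam * β j) ^ 2) * PowerSeries.X ^ 2 := by
  have hβ : ∀ k, β (k + 2) = q⁻¹ * lam * β (k + 1) - q⁻¹ * β k := fun k => by
    field_simp
    linear_combination hrec k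
  rw [show (q⁻¹ * lam ^ 2 - 1) * q⁻¹ = (q⁻¹ * lam) ^ 2 - q⁻¹ by ring,
    show (q⁻¹ * lam ^ 2 - 1) * q⁻¹ ^ 2 = q⁻¹ * ((q⁻¹ * lam) ^ 2 - q⁻¹) by ring,
    show q⁻¹ * (q⁻¹ * lam ^ 2 - 1) = (q⁻¹ * lam) ^ 2 - q⁻¹ by ring]
  exact cubic_mul_mk_sq_eq_of_recurrence (q⁻¹ * lam) q⁻¹ β hβ j
end

section
/- Setting T := Σ_{k≥1, l≥0, u≥0} β(k+u)·β(k+l+u+1)·Xᵏ·Yˡ·Zᵘ in the ring of formal power series in three variables X, Y, Z over ℝ, one has (1 + q⁻¹·Z)·(1 − λq⁻¹·Y + q⁻¹·Y²)·T = (q⁻¹λ − q⁻¹·Y − q⁻²·YZ)·(Σ_{k≥0, u≥0} β(k+u+1)²·X^{k+1}·Zᵘ) − q⁻¹·(Σ_{l≥0} β(l+1)·β(l)·X^{l+1}). -/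
/-! The quadratic `1 - λq⁻¹Y + q⁻¹Y²` is the characteristic polynomial of the recurrence of `β`,
read along the `Y`-direction of `T`, so it kills every `Yˡ` with `l ≥ 2` and leaves
`P - q⁻¹·Y·B`, where `B = Σ β(k+u)²XᵏZᵘ` and `P = Σ β(k+u)β(k+u+1)XᵏZᵘ` (`k ≥ 1`).
Multiplying by `1 + q⁻¹Z` and using the recurrence once more along the diagonal
turns `P` into `q⁻¹λ·B - q⁻¹·Σ β(l+1)β(l)X^{l+1}`. -/

/-- The formal power series in three variables `X = X 0`, `Y = X 1`, `Z = X 2` over `ℝ`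
with coefficient `f a b c` on `Xᵃ·Yᵇ·Zᶜ`. -/
def mk3 (f : ℕ → ℕ → ℕ → ℝ) : MvPowerSeries (Fin 3) ℝ := fun m => f (m 0) (m 1) (m 2)

open MvPowerSeries

lemma coeff_mk3 (f : ℕ → ℕ → ℕ → ℝ) (m : Fin 3 →₀ ℕ) :
    coeff m (mk3 f) = f (m 0) (m 1) (m 2) := rfl

lemma mk3_add (f g : ℕ → ℕ → ℕ → ℝ) : mk3 f + mk3 g = mk3 (fun a b c => f a b c + g a b c) :=
  rfl

lemma mk3_sub (f g : ℕ → ℕ → ℕ → ℝ) : mk3 f - mk3 g = mk3 (fun a b c => f a b c - g a b c) :=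
  rfl

lemma C_mul_mk3 (r : ℝ) (f : ℕ → ℕ → ℕ → ℝ) : C r * mk3 f = mk3 (fun a b c => r * f a b c) := by
  ext m
  rw [coeff_C_mul, coeff_mk3, coeff_mk3]

lemma X_zero_mul_mk3 (f : ℕ → ℕ → ℕ → ℝ) :
    X 0 * mk3 f = mk3 (fun a b c => if a = 0 then 0 else f (a - 1) b c) := by
  ext m
  rw [X, coeff_monomial_mul, coeff_mk3]
  simp [Finsupp.single_le_iff, Nat.one_le_iff_ne_zero, coeff_mk3]

lemma X_one_mul_mk3 (f : ℕ → ℕ → ℕ → ℝ) :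
    X 1 * mk3 f = mk3 (fun a b c => if b = 0 then 0 else f a (b - 1) c) := by
  ext m
  rw [X, coeff_monomial_mul, coeff_mk3]
  simp [Finsupp.single_le_iff, Nat.one_le_iff_ne_zero, coeff_mk3]

lemma X_two_mul_mk3 (f : ℕ → ℕ → ℕ → ℝ) :
    X 2 * mk3 f = mk3 (fun a b c => if c = 0 then 0 else f a b (c - 1)) := by
  ext m
  rw [X, coeff_monomial_mul, coeff_mk3]
  simp [Finsupp.single_le_iff, Nat.one_le_iff_ne_zero, coeff_mk3]

lemma mul_mk3_of_recurrence (a b : ℝ) (f : ℕ → ℕ → ℕ → ℝ)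
    (hf : ∀ k l u, f k (l + 2) u = a * f k (l + 1) u - b * f k l u) :
    (1 - C a * X 1 + C b * X 1 ^ 2) * mk3 f =
      mk3 (fun k l u => if l = 0 then f k 0 u else if l = 1 then f k 1 u - a * f k 0 u else 0) := by
  simp only [add_mul, sub_mul, one_mul, pow_two, mul_assoc, X_one_mul_mk3, C_mul_mk3, mk3_add,
    mk3_sub]
  congr
  funext k l u
  rcases l with _ | _ | l
  · simp
  · simp
  · simp [hf]

section Recurrence

variable {q lam : ℝ} {β : ℕ → ℝ}

lemma succ_succ_eq_of_recurrence (hq : q ≠ 0)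
    (hrec : ∀ k : ℕ, q * β (k + 2) - lam * β (k + 1) + β k = 0) (n : ℕ) :
    β (n + 2) = lam * q⁻¹ * β (n + 1) - q⁻¹ * β n := by
  field_simp
  linear_combination hrec n

variable (hstep : ∀ n, β (n + 2) = lam * q⁻¹ * β (n + 1) - q⁻¹ * β n)
include hstep

lemma Y_charPoly_mul_T :
    (1 - C (lam * q⁻¹) * X 1 + C q⁻¹ * X 1 ^ 2) *
        mk3 (fun k l u => if 1 ≤ k then β (k + u) * β (k + l + u + 1) else 0) =
      X 0 * mk3 (fun k l u => if l = 0 then β (k + u + 1) * β (k + u + 2) else 0) -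
        C q⁻¹ * X 1 * (X 0 * mk3 (fun k l u => if l = 0 then β (k + u + 1) ^ 2 else 0)) := by
  rw [mul_mk3_of_recurrence]
  · simp only [mul_assoc, X_zero_mul_mk3, X_one_mul_mk3, C_mul_mk3, mk3_sub]
    congr
    funext k l u
    rcases k with _ | k
    · simp
    rcases l with _ | _ | l
    · simp [add_right_comm]
    · simp only [Nat.add_eq_zero_iff, one_ne_zero, and_false, ↓reduceIte, le_add_iff_nonneg_left,
        zero_le, add_tsub_cancel_right]
      linear_combination (norm := ring_nf) β (k + u + 1) * hstep (k + u + 1)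
    · simp
  · intro k l u
    split_ifs
    · rw [show k + (l + 2) + u + 1 = k + l + u + 1 + 2 by ring, hstep]
      ring_nf
    · ring

lemma one_add_Z_mul_P :
    (1 + C q⁻¹ * X 2) *
        (X 0 * mk3 (fun k l u => if l = 0 then β (k + u + 1) * β (k + u + 2) else 0)) =
      C (q⁻¹ * lam) * (X 0 * mk3 (fun k l u => if l = 0 then β (k + u + 1) ^ 2 else 0)) -
        C q⁻¹ * (X 0 * mk3 (fun a b c => if b = 0 ∧ c = 0 then β (a + 1) * β a else 0)) := by
  simp only [add_mul, one_mul, mul_assoc, X_zero_mul_mk3, X_two_mul_mk3, C_mul_mk3, mk3_add,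
    mk3_sub]
  congr
  funext k l u
  rcases k with _ | k
  · simp
  rcases l with _ | l
  · rcases u with _ | u
    · simp only [Nat.add_eq_zero_iff, one_ne_zero, and_false, and_self, ↓reduceIte,
        add_tsub_cancel_right]
      linear_combination (norm := ring_nf) β (k + 1) * hstep k
    · simp only [Nat.add_eq_zero_iff, one_ne_zero, and_false, ↓reduceIte, add_tsub_cancel_right]
      linear_combination (norm := ring_nf) β (k + u + 2) * hstep (k + u + 1)
  · simp

end Recurrence

/-- with `T = Σ_{k≥1, l≥0, u≥0} β(k+u)β(k+l+u+1)XᵏYˡZᵘ`,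
`(1 + q⁻¹Z)(1 − λq⁻¹Y + q⁻¹Y²)·T
  = (q⁻¹λ − q⁻¹Y − q⁻²YZ)·(Σ_{k,u≥0} β(k+u+1)²X^{k+1}Zᵘ)
    − q⁻¹·(Σ_{l≥0} β(l+1)β(l)X^{l+1})`. -/
theorem stmt12 (q lam : ℝ) (hq : q ≠ 0) (β : ℕ → ℝ)
    (hrec : ∀ k : ℕ, q * β (k + 2) - lam * β (k + 1) + β k = 0) :
    (1 + MvPowerSeries.C (σ := Fin 3) (R := ℝ) q⁻¹ * MvPowerSeries.X 2) *
      (1 - MvPowerSeries.C (σ := Fin 3) (R := ℝ) (lam * q⁻¹) * MvPowerSeries.X 1 +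
        MvPowerSeries.C (σ := Fin 3) (R := ℝ) q⁻¹ * MvPowerSeries.X 1 ^ 2) *
      mk3 (fun k l u => if 1 ≤ k then β (k + u) * β (k + l + u + 1) else 0) =
    (MvPowerSeries.C (σ := Fin 3) (R := ℝ) (q⁻¹ * lam) -
        MvPowerSeries.C (σ := Fin 3) (R := ℝ) q⁻¹ * MvPowerSeries.X 1 -
        MvPowerSeries.C (σ := Fin 3) (R := ℝ) (q⁻¹ ^ 2) * MvPowerSeries.X 1 * MvPowerSeries.X 2) *
      (MvPowerSeries.X 0 * mk3 (fun k l u => if l = 0 then β (k + u + 1) ^ 2 else 0)) -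
    MvPowerSeries.C (σ := Fin 3) (R := ℝ) q⁻¹ *
      (MvPowerSeries.X 0 *
        mk3 (fun a b c => if b = 0 ∧ c = 0 then β (a + 1) * β a else 0)) := by
  have hstep := succ_succ_eq_of_recurrence hq hrec
  rw [mul_assoc, Y_charPoly_mul_T hstep, mul_sub, one_add_Z_mul_P hstep, map_pow]
  ring
end

section
/- For every (y₁,y₁₂,y₂) ∈ ℚ_p³ such that y₁₂² − 4y₁y₂ = d·c² for some c ∈ ℚ_pˣ, there exist unique l₁ ∈ ℤ and l₂ ∈ ℕ for which there are u ∈ ℤ_pˣ and k ∈ GL₂(ℤ_p) with M(y₁,y₁₂,y₂) = p^{l₁} · (u / det k) · kᵀ · diag(1, −d·p^{2l₂}) · k. -/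
/-!
Multiplying by a power `p ^ (-l₁)` turns `M` into a symmetric matrix `N` over `ℤ_p` with a unit
entry. Since `2` is a unit, a change of basis in `GL₂(ℤ_p)` makes `N₀₀` a unit, and completing the
square gives `N = N₀₀ • kᵀ diag(1, δ) k` as soon as `det N = δ e²` with `e` a unit; here the
discriminant forces `δ = -d p^(2 l₂)`, the bound `‖d‖ ≥ p⁻¹` making the square root integral.
Conversely, congruence by `GL₂(ℤ_p)` keeps a matrix non-zero modulo `p`, so in any such form
`p ^ (-l₁)` is the largest norm of an entry of `M`, and `‖det M‖` then determines `l₂`.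
-/

open Matrix

noncomputable def coeM {p : ℕ} [Fact p.Prime] (k : Matrix (Fin 2) (Fin 2) ℤ_[p]) :
    Matrix (Fin 2) (Fin 2) ℚ_[p] :=
  k.map (fun z => (z : ℚ_[p]))

namespace Matrix

variable {R : Type*} [CommRing R]

theorem IsSymm.exists_GL_eq_smul_transpose_mul_diagonal_mul {N : Matrix (Fin 2) (Fin 2) R}
    (hN : N.IsSymm) (h00 : IsUnit (N 0 0)) {δ e : R} (he : IsUnit e)
    (hdet : N.det = δ * e ^ 2) :
    ∃ k : GL (Fin 2) R, N = N 0 0 • ((k : Matrix (Fin 2) (Fin 2) R)ᵀ * diagonal ![1, δ] * k) := by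
  obtain ⟨a, ha⟩ := h00
  refine ⟨GeneralLinearGroup.mk'' !![1, N 0 1 * ↑a⁻¹; 0, e * ↑a⁻¹] ?_, ?_⟩
  · simpa using he.mul a⁻¹.isUnit
  have hainv : (a : R) * ↑a⁻¹ = 1 := a.mul_inv
  rw [det_fin_two, ← ha, hN.apply 0 1] at hdet
  ext i j
  fin_cases i <;> fin_cases j <;> simp [← ha, mul_apply, Fin.sum_univ_two, hN.apply 0 1]
  · linear_combination -N 0 1 * hainv
  · linear_combination -N 0 1 * hainv
  · linear_combination (↑a⁻¹ : R) * hdet - (N 1 1 + ↑a⁻¹ * (N 0 1 ^ 2 + δ * e ^ 2)) * hainv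

variable [IsLocalRing R]

theorem IsSymm.exists_GL_isUnit_transpose_mul_mul_apply_zero_zero (h2 : IsUnit (2 : R))
    {N : Matrix (Fin 2) (Fin 2) R} (hN : N.IsSymm) (hunit : ∃ i j, IsUnit (N i j)) :
    ∃ g : GL (Fin 2) R, IsUnit (((g : Matrix (Fin 2) (Fin 2) R)ᵀ * N * g) 0 0) := by
  by_cases h00 : IsUnit (N 0 0)
  · exact ⟨1, by simpa using h00⟩
  by_cases h11 : IsUnit (N 1 1)
  · refine ⟨GeneralLinearGroup.mk'' !![0, 1; 1, 0] (by simp), ?_⟩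
    simpa [mul_apply, Fin.sum_univ_two] using h11
  have h01 : IsUnit (N 0 1) := by
    obtain ⟨i, j, hij⟩ := hunit
    fin_cases i <;> fin_cases j <;> simp_all [hN.apply 0 1]
  refine ⟨GeneralLinearGroup.mk'' !![1, 0; 1, 1] (by simp), ?_⟩
  -- the new corner entry is `N₀₀ + 2 N₀₁ + N₁₁`, a unit plus two elements of the maximal ideal
  by_contra h
  rw [← mem_nonunits_iff, ← IsLocalRing.mem_maximalIdeal] at h00 h11 h
  have h2N : 2 * N 0 1 ∈ IsLocalRing.maximalIdeal R := by
    convert Ideal.sub_mem _ (Ideal.sub_mem _ h h00) h11 using 1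
    simp [mul_apply, Fin.sum_univ_two, hN.apply 0 1]
    ring
  exact (IsLocalRing.mem_maximalIdeal _).mp h2N (h2.mul h01)

theorem IsSymm.exists_unit_GL_eq_smul_transpose_mul_diagonal_mul (h2 : IsUnit (2 : R))
    {N : Matrix (Fin 2) (Fin 2) R} (hN : N.IsSymm) (hunit : ∃ i j, IsUnit (N i j))
    {δ e : R} (he : IsUnit e) (hdet : N.det = δ * e ^ 2) :
    ∃ (v : Rˣ) (k : GL (Fin 2) R),
      N = (v : R) • ((k : Matrix (Fin 2) (Fin 2) R)ᵀ * diagonal ![1, δ] * k) := by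
  obtain ⟨g, hg⟩ := hN.exists_GL_isUnit_transpose_mul_mul_apply_zero_zero h2 hunit
  set N' := (g : Matrix (Fin 2) (Fin 2) R)ᵀ * N * g
  have hN' : N'.IsSymm := by simp [N', IsSymm, transpose_mul, hN.eq, Matrix.mul_assoc]
  have hdet' : N'.det = δ * ((g : Matrix (Fin 2) (Fin 2) R).det * e) ^ 2 := by
    simp [N', det_mul, hdet]
    ring
  obtain ⟨k, hk⟩ := hN'.exists_GL_eq_smul_transpose_mul_diagonal_mul hg
    (((isUnit_iff_isUnit_det _).mp g.isUnit).mul he) hdet'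
  refine ⟨hg.unit, k * g⁻¹, ?_⟩
  have hN_eq : N = ((g⁻¹ : GL (Fin 2) R) : Matrix (Fin 2) (Fin 2) R)ᵀ * N' *
      ((g⁻¹ : GL (Fin 2) R) : Matrix (Fin 2) (Fin 2) R) := by
    simp [N', ← Matrix.mul_assoc, ← transpose_mul]
  rw [hN_eq, IsUnit.unit_spec]
  conv_lhs => rw [hk]
  simp [transpose_mul, Matrix.mul_assoc]

/-- Having a unit entry means being non-zero modulo the maximal ideal, which is preserved by
multiplication with invertible matrices. -/
theorem exists_isUnit_apply_mul_mul {n : Type*} [Fintype n] [DecidableEq n]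
    {A X B : Matrix n n R} (hA : IsUnit A) (hB : IsUnit B) (hX : ∃ i j, IsUnit (X i j)) :
    ∃ i j, IsUnit ((A * X * B) i j) := by
  by_contra! h
  obtain ⟨i, j, hij⟩ := hX
  let φ := (IsLocalRing.residue R).mapMatrix (m := n)
  have h0 : φ (A * X * B) = 0 := by
    ext i j
    simpa [φ, IsLocalRing.residue_eq_zero_iff] using h i j
  rw [map_mul, map_mul, (hB.map φ).mul_left_eq_zero, (hA.map φ).mul_right_eq_zero] at h0
  exact (IsLocalRing.residue_ne_zero_iff_isUnit _).mpr hij (congrFun (congrFun h0 i) j)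

end Matrix

variable {p : ℕ} [Fact p.Prime]

theorem PadicInt.isUnit_two (hp : Odd p) : IsUnit (2 : ℤ_[p]) := by
  rw [PadicInt.isUnit_iff, ← Nat.cast_ofNat, PadicInt.norm_natCast_eq_one_iff]
  exact Nat.coprime_two_right.mpr hp

section SupNorm

attribute [local instance] Matrix.normedAddCommGroup Matrix.normedSpace

theorem PadicInt.norm_matrix_eq_one {m n : Type*} [Fintype m] [Fintype n]
    {K : Matrix m n ℤ_[p]} (h : ∃ i j, IsUnit (K i j)) : ‖K‖ = 1 := by
  obtain ⟨i, j, hij⟩ := h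
  refine le_antisymm ((norm_le_iff zero_le_one).mpr fun _ _ => PadicInt.norm_le_one _) ?_
  rw [← PadicInt.isUnit_iff.mp hij]
  exact norm_entry_le_entrywise_sup_norm K

theorem norm_coeM (K : Matrix (Fin 2) (Fin 2) ℤ_[p]) : ‖coeM K‖ = ‖K‖ :=
  norm_map_eq K _ PadicInt.padic_norm_e_of_padicInt

end SupNorm

namespace Padic

theorem norm_le_one_of_norm_mul_sq_le_one {d c : ℚ_[p]} (hd : (p : ℝ)⁻¹ ≤ ‖d‖)
    (h : ‖d * c ^ 2‖ ≤ 1) : ‖c‖ ≤ 1 := by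
  have hp : (1 : ℝ) < p := mod_cast (Fact.out : p.Prime).one_lt
  rw [norm_mul, norm_pow] at h
  have hsq : ‖c‖ ^ 2 < (p : ℝ) ^ 2 := by
    have : (p : ℝ)⁻¹ * ‖c‖ ^ 2 ≤ 1 := (mul_le_mul_of_nonneg_right hd (by positivity)).trans h
    rw [inv_mul_le_iff₀ (by positivity)] at this
    nlinarith
  -- norms being integer powers of `p`, `‖c‖ < p` already forces `‖c‖ ≤ 1`
  have hlt : ‖c‖ < (p : ℝ) ^ ((0 : ℤ) + 1) := by
    simpa using lt_of_pow_lt_pow_left₀ 2 (by positivity) hsq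
  simpa using (norm_le_pow_iff_norm_lt_pow_add_one c 0).mpr hlt

theorem exists_eq_pow_mul_unit {c : ℚ_[p]} (hc0 : c ≠ 0) (hc : ‖c‖ ≤ 1) :
    ∃ (n : ℕ) (ε : ℤ_[p]ˣ), c = (p : ℚ_[p]) ^ n * ((ε : ℤ_[p]) : ℚ_[p]) := by
  obtain ⟨x, rfl⟩ : ∃ x : ℤ_[p], (x : ℚ_[p]) = c := ⟨⟨c, hc⟩, rfl⟩
  have hx : x ≠ 0 := by rintro rfl; exact hc0 rfl
  refine ⟨x.valuation, PadicInt.unitCoeff hx, ?_⟩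
  have := congrArg ((↑) : ℤ_[p] → ℚ_[p]) (PadicInt.unitCoeff_spec hx)
  push_cast at this
  rw [mul_comm]
  exact this

theorem exists_eq_zpow_smul_map {m n : Type*} [Finite m] [Finite n] [Nonempty m] [Nonempty n]
    {M : Matrix m n ℚ_[p]} (hM : M ≠ 0) :
    ∃ (l : ℤ) (N : Matrix m n ℤ_[p]),
      M = (p : ℚ_[p]) ^ l • N.map ((↑) : ℤ_[p] → ℚ_[p]) ∧ ∃ i j, IsUnit (N i j) := by
  obtain ⟨⟨i, j⟩, hmax⟩ := Finite.exists_max fun ij : m × n => ‖M ij.1 ij.2‖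
  have hx : M i j ≠ 0 := by
    refine fun h0 => hM (Matrix.ext fun a b => norm_le_zero_iff.mp ?_)
    simpa [h0] using hmax (a, b)
  set l := (M i j).valuation
  have hp0 : (p : ℚ_[p]) ≠ 0 := Nat.cast_ne_zero.mpr (Fact.out : p.Prime).ne_zero
  have hpR : (p : ℝ) ≠ 0 := Nat.cast_ne_zero.mpr (Fact.out : p.Prime).ne_zero
  have hnorm_ij : ‖(p : ℚ_[p]) ^ (-l) * M i j‖ = 1 := by
    rw [norm_mul, norm_p_zpow, neg_neg, norm_eq_zpow_neg_valuation hx, ← zpow_add₀ hpR,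
      add_neg_cancel, zpow_zero]
  have hnorm : ∀ a b, ‖(p : ℚ_[p]) ^ (-l) * M a b‖ ≤ 1 := by
    intro a b
    rw [norm_mul, norm_p_zpow, neg_neg]
    calc (p : ℝ) ^ l * ‖M a b‖ ≤ (p : ℝ) ^ l * ‖M i j‖ := by gcongr; exact hmax (a, b)
      _ = 1 := by rwa [norm_mul, norm_p_zpow, neg_neg] at hnorm_ij
  refine ⟨l, Matrix.of fun a b => (⟨_, hnorm a b⟩ : ℤ_[p]), ?_, i, j, ?_⟩
  · ext a b
    change M a b = (p : ℚ_[p]) ^ l * ((p : ℚ_[p]) ^ (-l) * M a b)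
    rw [← mul_assoc, ← zpow_add₀ hp0, add_neg_cancel, zpow_zero, one_mul]
  · exact PadicInt.isUnit_iff.mpr hnorm_ij

end Padic

theorem coeM_eq_mapMatrix (k : Matrix (Fin 2) (Fin 2) ℤ_[p]) :
    coeM k = (PadicInt.Coe.ringHom (p := p)).mapMatrix k := rfl

theorem coeM_det (k : Matrix (Fin 2) (Fin 2) ℤ_[p]) : (coeM k).det = (k.det : ℚ_[p]) := by
  rw [coeM_eq_mapMatrix, ← RingHom.map_det]
  rfl

theorem coeM_smul (a : ℤ_[p]) (k : Matrix (Fin 2) (Fin 2) ℤ_[p]) :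
    coeM (a • k) = (a : ℚ_[p]) • coeM k := by
  ext i j
  exact PadicInt.coe_mul a (k i j)

theorem coeM_transpose_mul_diagonal_mul (k : Matrix (Fin 2) (Fin 2) ℤ_[p]) (δ : ℤ_[p]) :
    (coeM k)ᵀ * diagonal ![1, (δ : ℚ_[p])] * coeM k = coeM (kᵀ * diagonal ![1, δ] * k) := by
  simp only [coeM_eq_mapMatrix, map_mul, RingHom.mapMatrix_apply, transpose_map]
  rw [diagonal_map (map_zero _)]
  congr
  ext i
  fin_cases i <;> rfl

theorem norm_coe_det_GL (k : GL (Fin 2) ℤ_[p]) :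
    ‖((k : Matrix (Fin 2) (Fin 2) ℤ_[p]).det : ℚ_[p])‖ = 1 :=
  PadicInt.norm_units (GeneralLinearGroup.det k)

def HasNormalForm (d : ℤ_[p]) (M : Matrix (Fin 2) (Fin 2) ℚ_[p]) (l : ℤ × ℕ) : Prop :=
  ∃ (u : ℤ_[p]ˣ) (k : GL (Fin 2) ℤ_[p]),
    M = ((p : ℚ_[p]) ^ l.1 * ((u : ℤ_[p]) : ℚ_[p]) /
          (((k : Matrix (Fin 2) (Fin 2) ℤ_[p]).det : ℤ_[p]) : ℚ_[p])) •
        ((coeM (k : Matrix (Fin 2) (Fin 2) ℤ_[p]))ᵀ *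
          Matrix.diagonal ![1, -(d : ℚ_[p]) * (p : ℚ_[p]) ^ (2 * l.2)] *
          coeM (k : Matrix (Fin 2) (Fin 2) ℤ_[p]))

namespace HasNormalForm

variable {d : ℤ_[p]} {M : Matrix (Fin 2) (Fin 2) ℚ_[p]} {l : ℤ × ℕ}

theorem diagonal_eq_coe :
    diagonal ![1, -(d : ℚ_[p]) * (p : ℚ_[p]) ^ (2 * l.2)] =
      diagonal ![1, ((-d * (p : ℤ_[p]) ^ (2 * l.2) : ℤ_[p]) : ℚ_[p])] := by
  push_cast
  rfl

theorem exists_eq_smul_coeM (h : HasNormalForm d M l) :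
    ∃ (s : ℚ_[p]) (k : GL (Fin 2) ℤ_[p]), ‖s‖ = (p : ℝ) ^ (-l.1) ∧
      M = s • coeM ((k : Matrix (Fin 2) (Fin 2) ℤ_[p])ᵀ *
        diagonal ![1, -d * (p : ℤ_[p]) ^ (2 * l.2)] * (k : Matrix (Fin 2) (Fin 2) ℤ_[p])) := by
  obtain ⟨u, k, hM⟩ := h
  refine ⟨_, k, ?_, by rw [hM, diagonal_eq_coe, coeM_transpose_mul_diagonal_mul]⟩
  rw [norm_div, norm_mul, Padic.norm_p_zpow, norm_coe_det_GL, PadicInt.padic_norm_e_of_padicInt,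
    PadicInt.norm_units, mul_one, div_one]

theorem of_eq_smul_coeM (v : ℤ_[p]ˣ) (k : GL (Fin 2) ℤ_[p])
    (h : M = ((p : ℚ_[p]) ^ l.1 * ((v : ℤ_[p]) : ℚ_[p])) •
      coeM ((k : Matrix (Fin 2) (Fin 2) ℤ_[p])ᵀ * diagonal ![1, -d * (p : ℤ_[p]) ^ (2 * l.2)] *
        (k : Matrix (Fin 2) (Fin 2) ℤ_[p]))) :
    HasNormalForm d M l := by
  refine ⟨v * GeneralLinearGroup.det k, k, ?_⟩
  have hdet0 : ((k : Matrix (Fin 2) (Fin 2) ℤ_[p]).det : ℚ_[p]) ≠ 0 := by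
    rw [← norm_ne_zero_iff, norm_coe_det_GL]
    exact one_ne_zero
  rw [h, diagonal_eq_coe, coeM_transpose_mul_diagonal_mul, Units.val_mul, PadicInt.coe_mul]
  congr 1
  field_simp
  rfl

section SupNorm

attribute [local instance] Matrix.normedAddCommGroup Matrix.normedSpace

theorem norm_eq (h : HasNormalForm d M l) : ‖M‖ = (p : ℝ) ^ (-l.1) := by
  obtain ⟨s, k, hs, rfl⟩ := h.exists_eq_smul_coeM
  have hK := exists_isUnit_apply_mul_mul ((isUnit_transpose _).mpr k.isUnit) k.isUnit
    (X := diagonal ![1, -d * (p : ℤ_[p]) ^ (2 * l.2)]) ⟨0, 0, by simp⟩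
  rw [norm_smul, hs, norm_coeM, PadicInt.norm_matrix_eq_one hK, mul_one]

end SupNorm

theorem norm_det_eq (h : HasNormalForm d M l) :
    ‖M.det‖ = ‖(d : ℚ_[p])‖ * (p : ℝ) ^ (-2 * l.1 - 2 * l.2) := by
  obtain ⟨s, k, hs, rfl⟩ := h.exists_eq_smul_coeM
  have hp0 : (p : ℝ) ≠ 0 := Nat.cast_ne_zero.mpr (Fact.out : p.Prime).ne_zero
  have hk : ‖(k : Matrix (Fin 2) (Fin 2) ℤ_[p]).det‖ = 1 :=
    PadicInt.norm_units (GeneralLinearGroup.det k)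
  rw [det_smul, coeM_det, det_mul, det_mul, det_transpose, det_diagonal]
  simp [Fin.prod_univ_two, hs, hk, zpow_sub₀ hp0, _root_.zpow_neg, _root_.zpow_mul,
    mul_comm (2 : ℤ)]
  ring

theorem unique (hd : d ≠ 0) {l' : ℤ × ℕ} (h : HasNormalForm d M l) (h' : HasNormalForm d M l') :
    l = l' := by
  have hp1 : (1 : ℝ) < p := mod_cast (Fact.out : p.Prime).one_lt
  have hinj := zpow_right_injective₀ (zero_lt_one.trans hp1) hp1.ne'
  have hd' : ‖(d : ℚ_[p])‖ ≠ 0 := by simpa using hd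
  have h₁ : -l.1 = -l'.1 := hinj (h.norm_eq.symm.trans h'.norm_eq)
  have h₂ : -2 * l.1 - 2 * (l.2 : ℤ) = -2 * l'.1 - 2 * l'.2 :=
    hinj (mul_left_cancel₀ hd' (h.norm_det_eq.symm.trans h'.norm_det_eq))
  ext <;> omega

end HasNormalForm

theorem exists_hasNormalForm (hp : Odd p) {d : ℤ_[p]} (hd : (p : ℝ)⁻¹ ≤ ‖(d : ℚ_[p])‖)
    {M : Matrix (Fin 2) (Fin 2) ℚ_[p]} (hM : M.IsSymm) {c : ℚ_[p]} (hc : c ≠ 0)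
    (hdet : M.det = -d * c ^ 2) : ∃ l, HasNormalForm d M l := by
  have hd0 : (d : ℚ_[p]) ≠ 0 := by
    rw [← norm_ne_zero_iff]
    exact ((inv_pos.mpr (Nat.cast_pos.mpr (Fact.out : p.Prime).pos)).trans_le hd).ne'
  have hM0 : M ≠ 0 := by
    rintro rfl
    simp [hd0, hc] at hdet
  obtain ⟨l₁, N, hMN, hN⟩ := Padic.exists_eq_zpow_smul_map hM0
  replace hMN : M = (p : ℚ_[p]) ^ l₁ • coeM N := hMN
  subst hMN
  have hp0 : (p : ℚ_[p]) ^ l₁ ≠ 0 :=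
    zpow_ne_zero _ (Nat.cast_ne_zero.mpr (Fact.out : p.Prime).ne_zero)
  have hNsymm : N.IsSymm :=
    IsSymm.ext fun i j => Subtype.coe_injective <| mul_left_cancel₀ hp0 (hM.apply i j)
  set c₀ := c / (p : ℚ_[p]) ^ l₁
  have hdetN : ((N.det : ℤ_[p]) : ℚ_[p]) = -d * c₀ ^ 2 := by
    rw [det_smul, coeM_det, Fintype.card_fin] at hdet
    simp only [c₀]
    field_simp
    linear_combination hdet
  have hc₀ : ‖c₀‖ ≤ 1 := Padic.norm_le_one_of_norm_mul_sq_le_one hd <| by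
    rw [← norm_neg, ← neg_mul, ← hdetN]
    exact PadicInt.norm_le_one _
  obtain ⟨l₂, ε, hε⟩ := Padic.exists_eq_pow_mul_unit (c := c₀) (div_ne_zero hc hp0) hc₀
  have hdetN' : N.det = (-d * (p : ℤ_[p]) ^ (2 * l₂)) * (ε : ℤ_[p]) ^ 2 := by
    apply Subtype.coe_injective
    push_cast
    rw [hdetN, hε]
    ring
  obtain ⟨v, k, hNk⟩ := hNsymm.exists_unit_GL_eq_smul_transpose_mul_diagonal_mul
    (PadicInt.isUnit_two hp) hN ε.isUnit hdetN'
  refine ⟨(l₁, l₂), HasNormalForm.of_eq_smul_coeM v k ?_⟩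
  rw [hNk, coeM_smul, mul_smul]

/-- every `(y₁,y₁₂,y₂) ∈ ℚ_p³` whose discriminant lies in `d·(ℚ_pˣ)²` admits
unique integers `l₁ ∈ ℤ`, `l₂ ∈ ℕ` such that the associated symmetric matrix
`[[y₁, y₁₂/2],[y₁₂/2, y₂]]` equals `p^{l₁}·(u/det k)·kᵀ·diag(1, −d·p^{2l₂})·k` for some
`u ∈ ℤ_pˣ`, `k ∈ GL₂(ℤ_p)`. -/
theorem stmt16 (p : ℕ) [Fact p.Prime] (hp : Odd p) (d : ℤ_[p])
    (hd : ‖(d : ℚ_[p])‖ = 1 ∨ ‖(d : ℚ_[p])‖ = (p : ℝ)⁻¹)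
    (y₁ y₁₂ y₂ : ℚ_[p])
    (hy : ∃ c : ℚ_[p], c ≠ 0 ∧ y₁₂ ^ 2 - 4 * y₁ * y₂ = (d : ℚ_[p]) * c ^ 2) :
    ∃! l : ℤ × ℕ, ∃ (u : ℤ_[p]ˣ) (k : GL (Fin 2) ℤ_[p]),
      !![y₁, y₁₂ / 2; y₁₂ / 2, y₂] =
        ((p : ℚ_[p]) ^ l.1 * ((u : ℤ_[p]) : ℚ_[p]) /
            (((k : Matrix (Fin 2) (Fin 2) ℤ_[p]).det : ℤ_[p]) : ℚ_[p])) •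
          ((coeM (k : Matrix (Fin 2) (Fin 2) ℤ_[p]))ᵀ *
            Matrix.diagonal ![1, -(d : ℚ_[p]) * (p : ℚ_[p]) ^ (2 * l.2)] *
            coeM (k : Matrix (Fin 2) (Fin 2) ℤ_[p])) := by
  obtain ⟨c, hc0, hc⟩ := hy
  have hd' : (p : ℝ)⁻¹ ≤ ‖(d : ℚ_[p])‖ := by
    rcases hd with h | h <;> rw [h]
    exact inv_le_one_of_one_le₀ (mod_cast (Fact.out : p.Prime).one_le)
  have hd0 : d ≠ 0 := by
    rintro rfl
    simp [(Fact.out : p.Prime).ne_zero] at hd'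
  have hM : (!![y₁, y₁₂ / 2; y₁₂ / 2, y₂] : Matrix (Fin 2) (Fin 2) ℚ_[p]).IsSymm := by
    ext i j; fin_cases i <;> fin_cases j <;> rfl
  have hdet : (!![y₁, y₁₂ / 2; y₁₂ / 2, y₂] : Matrix (Fin 2) (Fin 2) ℚ_[p]).det =
      -d * (c / 2) ^ 2 := by
    rw [det_fin_two_of]
    linear_combination (-1 / 4 : ℚ_[p]) * hc
  obtain ⟨l, hl⟩ := exists_hasNormalForm hp hd' hM (div_ne_zero hc0 two_ne_zero) hdet
  exact ⟨l, hl, fun l' hl' => HasNormalForm.unique hd0 hl' hl⟩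
end
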